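/- In an inverse semigroup S, if x₀ x₁ ⋯ xₙ is an idempotent and e₁, ..., eₙ are idempotents, then x₀ e₁ x₁ ⋯ eₙ xₙ is an idempotent. -/
import Mathlib


/-- An inverse semigroup: a semigroup in which every element `a` has a
unique element `a⁻¹` with `a * a⁻¹ * a = a` and `a⁻¹ * a * a⁻¹ = a⁻¹`. -/
class InverseSemigroup (S : Type*) extends Semigroup S, Inv S where
  mul_inv_mul : ∀ a : S, a * a⁻¹ * a = a
  inv_mul_inv : ∀ a : S, a⁻¹ * a * a⁻¹ = a⁻¹
  inv_unique : ∀ a b : S, a * b * a = a → b * a * b = b → b = a⁻¹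

/-- The natural partial order on an inverse semigroup: `a ≤ b` iff `a = a * a⁻¹ * b`. -/
def natLe {S : Type*} [InverseSemigroup S] (a b : S) : Prop := a = a * a⁻¹ * b

/-- The product `x 0 * x 1 * ⋯ * x n`. -/
def seqProd {S : Type*} [Mul S] : (n : ℕ) → (Fin (n + 1) → S) → S
  | 0, x => x 0
  | n + 1, x => seqProd n (Fin.init x) * x (Fin.last (n + 1))

/-- The interleaved product `x 0 * e 1 * x 1 * ⋯ * e n * x n`. -/
def interProd {S : Type*} [Mul S] : (n : ℕ) → (Fin (n + 1) → S) → (Fin n → S) → S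
  | 0, x, _ => x 0
  | n + 1, x, e => interProd n (Fin.init x) (Fin.init e) * e (Fin.last n) * x (Fin.last (n + 1))

namespace ISAux
open InverseSemigroup
variable {S : Type*} [InverseSemigroup S]

lemma inv_inv' (a : S) : (a⁻¹)⁻¹ = a :=
  (inv_unique a⁻¹ a (inv_mul_inv a) (mul_inv_mul a)).symm

lemma idem_inv {e : S} (he : e * e = e) : e⁻¹ = e :=
  (inv_unique e e (by rw [he, he]) (by rw [he, he])).symm

lemma idem_mul' {e : S} (he : e * e = e) (y : S) : e * (e * y) = e * y := by
  rw [← mul_assoc, he]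

lemma mul_inv_idem (a : S) : (a * a⁻¹) * (a * a⁻¹) = a * a⁻¹ := by
  rw [← mul_assoc, mul_inv_mul]

lemma inv_mul_idem (a : S) : (a⁻¹ * a) * (a⁻¹ * a) = a⁻¹ * a := by
  rw [← mul_assoc, inv_mul_inv]

lemma idem_mul_idem {e f : S} (he : e * e = e) (hf : f * f = f) :
    (e * f) * (e * f) = e * f := by
  set x := (e * f)⁻¹ with hxdef
  have g1 : (e * f) * (f * x * e) * (e * f) = e * f := by
    have := mul_inv_mul (e * f)
    simp only [mul_assoc] at this ⊢
    simpa only [idem_mul' he, idem_mul' hf] using this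
  have g2 : (f * x * e) * (e * f) * (f * x * e) = f * x * e := by
    have h2 := inv_mul_inv (e * f)
    simp only [mul_assoc, ← hxdef] at h2
    -- h2 : x * (e * (f * x)) = x
    simp only [mul_assoc, idem_mul' he, idem_mul' hf]
    -- goal : f * (x * (e * (f * (x * e)))) = f * (x * e)
    have : x * (e * (f * (x * e))) = x * e := by
      calc x * (e * (f * (x * e))) = x * (e * (f * x)) * e := by simp only [mul_assoc]
        _ = x * e := by rw [h2]
    rw [this]
  have hx_eq : f * x * e = x := inv_unique (e * f) (f * x * e) g1 g2
  have hxx : x * x = x := by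
    have h2 := inv_mul_inv (e * f)
    simp only [mul_assoc, ← hxdef] at h2
    calc x * x = (f * x * e) * (f * x * e) := by rw [hx_eq]
      _ = f * (x * (e * (f * (x * e)))) := by simp only [mul_assoc]
      _ = f * (x * (e * (f * x)) * e) := by simp only [mul_assoc]
      _ = f * (x * e) := by rw [h2]
      _ = x := by rw [← mul_assoc, hx_eq]
  have : e * f = x := by rw [← inv_inv' (e * f), ← hxdef, idem_inv hxx]
  rw [this]; exact hxx

lemma idem_comm {e f : S} (he : e * e = e) (hf : f * f = f) : e * f = f * e := by
  have hef := idem_mul_idem he hf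
  have hfe := idem_mul_idem hf he
  have g1 : (e * f) * (f * e) * (e * f) = e * f := by
    calc (e * f) * (f * e) * (e * f) = e * (f * f) * (e * e) * f := by simp only [mul_assoc]
      _ = (e * f) * (e * f) := by rw [hf, he]; simp only [mul_assoc]
      _ = e * f := hef
  have g2 : (f * e) * (e * f) * (f * e) = f * e := by
    calc (f * e) * (e * f) * (f * e) = f * (e * e) * (f * f) * e := by simp only [mul_assoc]
      _ = (f * e) * (f * e) := by rw [he, hf]; simp only [mul_assoc]
      _ = f * e := hfe
  have := inv_unique (e * f) (f * e) g1 g2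
  rw [this, idem_inv hef]

lemma conj_idem (a : S) {e : S} (he : e * e = e) :
    (a * e * a⁻¹) * (a * e * a⁻¹) = a * e * a⁻¹ := by
  calc (a * e * a⁻¹) * (a * e * a⁻¹) = a * (e * (a⁻¹ * a) * e) * a⁻¹ := by
        simp only [mul_assoc]
    _ = a * ((a⁻¹ * a) * (e * e)) * a⁻¹ := by
        rw [idem_comm he (inv_mul_idem a)]; simp only [mul_assoc]
    _ = a * a⁻¹ * a * (e * a⁻¹) := by rw [he]; simp only [mul_assoc]
    _ = a * e * a⁻¹ := by rw [mul_inv_mul]; simp only [mul_assoc]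




lemma key : ∀ (n : ℕ) (x : Fin (n + 1) → S) (e : Fin n → S),
    (∀ i, e i * e i = e i) →
    ∃ f : S, f * f = f ∧ interProd n x e = f * seqProd n x := by
  intro n
  induction n with
  | zero =>
    intro x e _
    exact ⟨x 0 * (x 0)⁻¹, mul_inv_idem (x 0), (mul_inv_mul (x 0)).symm⟩
  | succ n ih =>
    intro x e he
    obtain ⟨f, hf, hfe⟩ := ih (Fin.init x) (Fin.init e) (fun i => he i.castSucc)
    set P := seqProd n (Fin.init x) with hP
    set eL := e (Fin.last n) with heL
    have heLi : eL * eL = eL := he _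
    refine ⟨f * (P * eL * P⁻¹), idem_mul_idem hf (conj_idem P heLi), ?_⟩
    have hmid : P * eL = P * eL * (P⁻¹ * P) := by
      calc P * eL = P * P⁻¹ * P * eL := by rw [mul_inv_mul]
        _ = P * P⁻¹ * (P * eL) := by simp only [mul_assoc]
        _ = P * ((P⁻¹ * P) * eL) := by simp only [mul_assoc]
        _ = P * (eL * (P⁻¹ * P)) := by rw [idem_comm (inv_mul_idem P) heLi]
        _ = P * eL * (P⁻¹ * P) := by simp only [mul_assoc]
    show interProd n (Fin.init x) (Fin.init e) * eL * x (Fin.last (n + 1))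
        = f * (P * eL * P⁻¹) * (P * x (Fin.last (n + 1)))
    calc interProd n (Fin.init x) (Fin.init e) * eL * x (Fin.last (n + 1))
        = f * P * eL * x (Fin.last (n + 1)) := by rw [hfe]
      _ = f * (P * eL) * x (Fin.last (n + 1)) := by simp only [mul_assoc]
      _ = f * (P * eL * (P⁻¹ * P)) * x (Fin.last (n + 1)) := by rw [← hmid]
      _ = f * (P * eL * P⁻¹) * (P * x (Fin.last (n + 1))) := by simp only [mul_assoc]

end ISAux


theorem interProd_idem_of_seqProd_idem {S : Type*} [InverseSemigroup S] (n : ℕ)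
    (x : Fin (n + 1) → S) (e : Fin n → S) (he : ∀ i, e i * e i = e i)
    (hx : seqProd n x * seqProd n x = seqProd n x) :
    interProd n x e * interProd n x e = interProd n x e := by
  obtain ⟨f, hf, hfe⟩ := ISAux.key n x e he
  rw [hfe]
  exact ISAux.idem_mul_idem hf hx
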